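/- arXiv:2102.07770 — 3 statements merged into one kernel-verified Lean document; each statement's English description precedes it below -/
import Mathlib

section
/- Under the stated positivity and integrability assumptions, the quantity F(ψ,φ*) := −∬ p̃ᵣ(θ) q_ψ(x|θ) log( p(θ) p_sim(x|θ) / p̃ᵣ(x) ) dν(x) dμ(θ) decomposes as F(ψ,φ*) = D_KL( p̃ᵣ(θ) q_ψ(x|θ) ‖ p̃ᵣ(θ) p_sim(x|θ) ) − D_KL( p̃ᵣ(θ) q_ψ(x|θ) ‖ p̃ᵣ(θ) q̃_ψ(x) ) − D_KL( q̃_ψ(x) ‖ p̃ᵣ(x) ) − ∫ p̃ᵣ(θ) log p(θ) dμ(θ). -/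
/-!
Take logarithms pointwise: with the weight `w(θ, x) = p̃ᵣ(θ) q_ψ(x|θ)`, every term is a
combination of the five integrals `∬ w log g` for `g = p_sim, q_ψ, q̃_ψ, p̃ᵣ(x), p(θ)`, and the
identity reduces to linear algebra among them. Two terms need Fubini first: `D_KL(q̃_ψ ‖ p̃ᵣ(x))`
becomes a `w`-integral after unfolding the marginal `q̃_ψ`, and `∫ p̃ᵣ log p` after inserting
`∫ q_ψ(x|θ) dν(x) = 1`. The logarithm rules need positive marginals, which holds as soon as
`μ ≠ 0`; for `μ = 0` both sides vanish.
-/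

open MeasureTheory Real Function

section

variable {α β : Type*} [MeasurableSpace α] [MeasurableSpace β]
  {μ : Measure α} {ν : Measure β}

theorem integral_pos_of_forall_pos {f : α → ℝ} (hμ : μ ≠ 0) (hf : Integrable f μ)
    (hpos : ∀ a, 0 < f a) : 0 < ∫ a, f a ∂μ := by
  refine (integral_pos_iff_support_of_nonneg (fun a => (hpos a).le) hf).2 ?_
  rw [show support f = Set.univ from Set.eq_univ_of_forall fun a => (hpos a).ne',
    pos_iff_ne_zero]
  exact Measure.measure_univ_ne_zero.2 hμ

variable [SFinite μ] [SFinite ν]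

theorem integral_integral_of_eq_sub {f g h : α → β → ℝ}
    (hfgh : ∀ a b, f a b = g a b - h a b)
    (hg : Integrable (uncurry g) (μ.prod ν)) (hh : Integrable (uncurry h) (μ.prod ν)) :
    ∫ a, ∫ b, f a b ∂ν ∂μ = ∫ z, g z.1 z.2 ∂μ.prod ν - ∫ z, h z.1 z.2 ∂μ.prod ν := by
  simp only [hfgh]
  rw [integral_integral (hg.sub hh)]
  exact integral_sub hg hh

theorem integral_integral_swap_sub {g h : α → β → ℝ}
    (hg : Integrable (uncurry g) (μ.prod ν)) (hh : Integrable (uncurry h) (μ.prod ν)) :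
    ∫ b, ∫ a, g a b - h a b ∂μ ∂ν = ∫ z, g z.1 z.2 ∂μ.prod ν - ∫ z, h z.1 z.2 ∂μ.prod ν := by
  rw [← integral_integral_swap (hg.sub hh)]
  exact integral_integral_of_eq_sub (fun _ _ => rfl) hg hh

end

theorem npr_proxy_decomposition_general
    {Θ X : Type*} [MeasurableSpace Θ] [MeasurableSpace X]
    (μ : Measure Θ) (ν : Measure X) [SigmaFinite μ] [SigmaFinite ν]
    (ptr p : Θ → ℝ) (psim qψ : Θ → X → ℝ) (tq tp : X → ℝ)
    -- strict positivity
    (hptr_pos : ∀ θ, 0 < ptr θ) (hp_pos : ∀ θ, 0 < p θ)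
    (hpsim_pos : ∀ θ x, 0 < psim θ x) (hqψ_pos : ∀ θ x, 0 < qψ θ x)
    -- probability densities
    (hqψ_den : ∀ θ, ∫ x, qψ θ x ∂ν = 1)
    -- marginals  q̃_ψ(x) = ∫ p̃ᵣ(θ) q_ψ(x|θ) dμ(θ)  and  p̃ᵣ(x) = ∫ p̃ᵣ(θ) p_sim(x|θ) dμ(θ)
    (htq_int : ∀ x, Integrable (fun θ => ptr θ * qψ θ x) μ)
    (htp_int : ∀ x, Integrable (fun θ => ptr θ * psim θ x) μ)
    (htq : ∀ x, tq x = ∫ θ, ptr θ * qψ θ x ∂μ)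
    (htp : ∀ x, tp x = ∫ θ, ptr θ * psim θ x ∂μ)
    -- finiteness of all integrals appearing
    (hInt₁ : Integrable (fun z : Θ × X =>
      ptr z.1 * qψ z.1 z.2 * Real.log (psim z.1 z.2)) (μ.prod ν))
    (hInt₂ : Integrable (fun z : Θ × X =>
      ptr z.1 * qψ z.1 z.2 * Real.log (qψ z.1 z.2)) (μ.prod ν))
    (hInt₃ : Integrable (fun z : Θ × X =>
      ptr z.1 * qψ z.1 z.2 * Real.log (tq z.2)) (μ.prod ν))
    (hInt₄ : Integrable (fun z : Θ × X =>
      ptr z.1 * qψ z.1 z.2 * Real.log (tp z.2)) (μ.prod ν))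
    (hInt₅ : Integrable (fun z : Θ × X =>
      ptr z.1 * qψ z.1 z.2 * Real.log (p z.1)) (μ.prod ν)) :
    -- F(ψ,φ*) = F₁(ψ) − (−F₂(ψ)) − R(ψ) − ∫ p̃ᵣ log p
    -(∫ θ, ∫ x, ptr θ * qψ θ x * Real.log (p θ * psim θ x / tp x) ∂ν ∂μ) =
      (∫ θ, ∫ x, ptr θ * qψ θ x *
          Real.log ((ptr θ * qψ θ x) / (ptr θ * psim θ x)) ∂ν ∂μ)
      - (∫ θ, ∫ x, ptr θ * qψ θ x *
          Real.log ((ptr θ * qψ θ x) / (ptr θ * tq x)) ∂ν ∂μ)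
      - (∫ x, tq x * Real.log (tq x / tp x) ∂ν)
      - (∫ θ, ptr θ * Real.log (p θ) ∂μ) := by
  rcases eq_or_ne μ 0 with rfl | hμ
  · simp [htq]
  have htq_pos (x : X) : 0 < tq x := htq x ▸
    integral_pos_of_forall_pos hμ (htq_int x) fun θ => mul_pos (hptr_pos θ) (hqψ_pos θ x)
  have htp_pos (x : X) : 0 < tp x := htp x ▸
    integral_pos_of_forall_pos hμ (htp_int x) fun θ => mul_pos (hptr_pos θ) (hpsim_pos θ x)
  have hlhs (θ : Θ) (x : X) : ptr θ * qψ θ x * log (p θ * psim θ x / tp x) =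
      (ptr θ * qψ θ x * log (p θ) + ptr θ * qψ θ x * log (psim θ x))
        - ptr θ * qψ θ x * log (tp x) := by
    rw [log_div (mul_pos (hp_pos θ) (hpsim_pos θ x)).ne' (htp_pos x).ne',
      log_mul (hp_pos θ).ne' (hpsim_pos θ x).ne']
    ring
  have hlog_ratio (θ : Θ) (x : X) {r : ℝ} (hr : 0 < r) :
      ptr θ * qψ θ x * log (ptr θ * qψ θ x / (ptr θ * r)) =
        ptr θ * qψ θ x * log (qψ θ x) - ptr θ * qψ θ x * log r := by
    rw [mul_div_mul_left _ _ (hptr_pos θ).ne', log_div (hqψ_pos θ x).ne' hr.ne', mul_sub]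
  have hmarginal (x : X) : tq x * log (tq x / tp x) =
      ∫ θ, ptr θ * qψ θ x * log (tq x) - ptr θ * qψ θ x * log (tp x) ∂μ := by
    rw [integral_sub ((htq_int x).mul_const _) ((htq_int x).mul_const _), integral_mul_const,
      integral_mul_const, ← htq x, log_div (htq_pos x).ne' (htp_pos x).ne', mul_sub]
  have hprior (θ : Θ) : ptr θ * log (p θ) = ∫ x, ptr θ * qψ θ x * log (p θ) ∂ν := by
    rw [integral_mul_const, integral_const_mul, hqψ_den θ, mul_one]
  rw [integral_integral_of_eq_sub hlhs (hInt₅.add hInt₁) hInt₄, integral_add hInt₅ hInt₁,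
    integral_integral_of_eq_sub (fun θ x => hlog_ratio θ x (hpsim_pos θ x)) hInt₂ hInt₁,
    integral_integral_of_eq_sub (fun θ x => hlog_ratio θ x (htq_pos x)) hInt₂ hInt₃,
    integral_congr_ae (ae_of_all _ hmarginal),
    integral_integral_swap_sub hInt₃ hInt₄,
    integral_congr_ae (ae_of_all _ hprior), integral_integral hInt₅]
  ring

/-- Decomposition of the neural posterior regularization proxy
`F(ψ,φ*) = −∬ p̃ᵣ(θ) q_ψ(x|θ) log (p(θ) p_sim(x|θ) / p̃ᵣ(x))` as
`F(ψ,φ*) = D_KL(p̃ᵣ q_ψ ‖ p̃ᵣ p_sim) − D_KL(p̃ᵣ q_ψ ‖ p̃ᵣ q̃_ψ) − D_KL(q̃_ψ ‖ p̃ᵣ(x))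
− ∫ p̃ᵣ(θ) log p(θ) dμ(θ)`. -/
theorem npr_proxy_decomposition
    {Θ X : Type*} [MeasurableSpace Θ] [MeasurableSpace X]
    (μ : Measure Θ) (ν : Measure X) [SigmaFinite μ] [SigmaFinite ν]
    (ptr p : Θ → ℝ) (psim qψ : Θ → X → ℝ) (tq tp : X → ℝ)
    -- measurability
    (hptr_meas : Measurable ptr) (hp_meas : Measurable p)
    (hpsim_meas : Measurable (Function.uncurry psim))
    (hqψ_meas : Measurable (Function.uncurry qψ))
    -- strict positivity
    (hptr_pos : ∀ θ, 0 < ptr θ) (hp_pos : ∀ θ, 0 < p θ)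
    (hpsim_pos : ∀ θ x, 0 < psim θ x) (hqψ_pos : ∀ θ x, 0 < qψ θ x)
    -- probability densities
    (hptr_den : ∫ θ, ptr θ ∂μ = 1) (hp_den : ∫ θ, p θ ∂μ = 1)
    (hpsim_den : ∀ θ, ∫ x, psim θ x ∂ν = 1)
    (hqψ_den : ∀ θ, ∫ x, qψ θ x ∂ν = 1)
    -- marginals  q̃_ψ(x) = ∫ p̃ᵣ(θ) q_ψ(x|θ) dμ(θ)  and  p̃ᵣ(x) = ∫ p̃ᵣ(θ) p_sim(x|θ) dμ(θ)
    (htq_int : ∀ x, Integrable (fun θ => ptr θ * qψ θ x) μ)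
    (htp_int : ∀ x, Integrable (fun θ => ptr θ * psim θ x) μ)
    (htq : ∀ x, tq x = ∫ θ, ptr θ * qψ θ x ∂μ)
    (htp : ∀ x, tp x = ∫ θ, ptr θ * psim θ x ∂μ)
    -- finiteness of all integrals appearing
    (hInt₀ : Integrable (fun z : Θ × X => ptr z.1 * qψ z.1 z.2) (μ.prod ν))
    (hInt₁ : Integrable (fun z : Θ × X =>
      ptr z.1 * qψ z.1 z.2 * Real.log (psim z.1 z.2)) (μ.prod ν))
    (hInt₂ : Integrable (fun z : Θ × X =>
      ptr z.1 * qψ z.1 z.2 * Real.log (qψ z.1 z.2)) (μ.prod ν))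
    (hInt₃ : Integrable (fun z : Θ × X =>
      ptr z.1 * qψ z.1 z.2 * Real.log (tq z.2)) (μ.prod ν))
    (hInt₄ : Integrable (fun z : Θ × X =>
      ptr z.1 * qψ z.1 z.2 * Real.log (tp z.2)) (μ.prod ν))
    (hInt₅ : Integrable (fun z : Θ × X =>
      ptr z.1 * qψ z.1 z.2 * Real.log (p z.1)) (μ.prod ν))
    (hInt₆ : Integrable (fun θ => ptr θ * Real.log (p θ)) μ) :
    -- F(ψ,φ*) = F₁(ψ) − (−F₂(ψ)) − R(ψ) − ∫ p̃ᵣ log p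
    -(∫ θ, ∫ x, ptr θ * qψ θ x * Real.log (p θ * psim θ x / tp x) ∂ν ∂μ) =
      (∫ θ, ∫ x, ptr θ * qψ θ x *
          Real.log ((ptr θ * qψ θ x) / (ptr θ * psim θ x)) ∂ν ∂μ)
      - (∫ θ, ∫ x, ptr θ * qψ θ x *
          Real.log ((ptr θ * qψ θ x) / (ptr θ * tq x)) ∂ν ∂μ)
      - (∫ x, tq x * Real.log (tq x / tp x) ∂ν)
      - (∫ θ, ptr θ * Real.log (p θ) ∂μ) :=
  npr_proxy_decomposition_general μ ν ptr p psim qψ tq tp hptr_pos hp_pos hpsim_pos hqψ_pos hqψ_den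
    htq_int htp_int htq htp hInt₁ hInt₂ hInt₃ hInt₄ hInt₅
end

section
/- The minimizer of L_λ over strictly positive conditional probability densities, when it exists, is unique up to μ⊗ν-almost-everywhere equality: if q₁ and q₂ are both strictly positive conditional densities minimizing L_λ, then q₁(x|θ) = q₂(x|θ) for μ⊗ν-almost every (θ,x). -/
/-!
The term `λ q g` of the loss is linear in `q`, so for the midpoint `m = (q₁ + q₂) / 2` it cancels
in `L(q₁) + L(q₂) - 2 L(m)`, which is therefore `∫ p̃ᵣ p_sim · (2 log m - log q₁ - log q₂)`.
By strict concavity of `log` this integrand is nonnegative and vanishes only where `q₁ = q₂`;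
it is also at most `p̃ᵣ p_sim |log q₁ - log q₂|`, which makes `m` admissible. Minimality of `q₁`
and `q₂` then makes the integral nonpositive, so `q₁ = q₂` almost everywhere.
-/

open MeasureTheory Real

/-- The admissible class of conditional densities for the regularized loss: strictly
positive, jointly measurable, normalized in `x` for every `θ`, uniformly bounded above by
`M`, and such that the loss integrand is integrable (all integrals appearing are finite). -/
def NPRAdmissible {Θ X : Type*} [MeasurableSpace Θ] [MeasurableSpace X]
    (μ : Measure Θ) (ν : Measure X) (ptr : Θ → ℝ) (psim g : Θ → X → ℝ)
    (lam M : ℝ) (q : Θ → X → ℝ) : Prop :=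
  Measurable (Function.uncurry q) ∧ (∀ θ x, 0 < q θ x) ∧ (∀ θ x, q θ x ≤ M) ∧
    (∀ θ, ∫ x, q θ x ∂ν = 1) ∧
    Integrable (fun z : Θ × X =>
      ptr z.1 * (psim z.1 z.2 * Real.log (q z.1 z.2)
        + lam * q z.1 z.2 * g z.1 z.2)) (μ.prod ν)

/-- The regularized loss
`L_λ(q) = −∬ p̃ᵣ(θ) [p_sim(x|θ) log q(x|θ) + λ q(x|θ) g(θ,x)] dν(x) dμ(θ)`. -/
noncomputable def NPRLoss {Θ X : Type*} [MeasurableSpace Θ] [MeasurableSpace X]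
    (μ : Measure Θ) (ν : Measure X) (ptr : Θ → ℝ) (psim g : Θ → X → ℝ)
    (lam : ℝ) (q : Θ → X → ℝ) : ℝ :=
  -∫ θ, ∫ x, ptr θ * (psim θ x * Real.log (q θ x) + lam * q θ x * g θ x) ∂ν ∂μ

noncomputable def logAmGmGap (a b : ℝ) : ℝ := 2 * log ((a + b) / 2) - (log a + log b)

section logAmGmGap

variable {a b : ℝ}

lemma logAmGmGap_pos (ha : 0 < a) (hb : 0 < b) (hab : a ≠ b) : 0 < logAmGmGap a b := by
  have h := strictConcaveOn_log_Ioi.2 ha hb hab (by norm_num : (0 : ℝ) < 1 / 2)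
    (by norm_num : (0 : ℝ) < 1 / 2) (by norm_num)
  simp only [smul_eq_mul] at h
  rw [logAmGmGap, show (a + b) / 2 = 1 / 2 * a + 1 / 2 * b by ring]
  linarith

lemma logAmGmGap_nonneg (ha : 0 < a) (hb : 0 < b) : 0 ≤ logAmGmGap a b := by
  rcases eq_or_ne a b with rfl | hab
  · simp [logAmGmGap, add_self_div_two, two_mul]
  · exact (logAmGmGap_pos ha hb hab).le

lemma eq_of_logAmGmGap_eq_zero (ha : 0 < a) (hb : 0 < b) (h : logAmGmGap a b = 0) : a = b := by
  by_contra hab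
  exact (logAmGmGap_pos ha hb hab).ne' h

lemma logAmGmGap_le_abs_log_sub (ha : 0 < a) (hb : 0 < b) :
    logAmGmGap a b ≤ |log a - log b| := by
  have hmax : log ((a + b) / 2) ≤ max (log b) (log a) := by
    rcases le_total a b with h | h
    · exact (log_le_log (by positivity) (by linarith)).trans (le_max_left _ _)
    · exact (log_le_log (by positivity) (by linarith)).trans (le_max_right _ _)
  have := max_sub_min_eq_abs (log b) (log a)
  have := min_add_max (log b) (log a)
  rw [logAmGmGap]
  linarith

end logAmGmGap

lemma MeasureTheory.ae_eq_of_integral_mul_logAmGmGap_nonpos {α : Type*} [MeasurableSpace α]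
    {μ : Measure α} {w f₁ f₂ : α → ℝ} (hw : ∀ z, 0 < w z) (hf₁ : ∀ z, 0 < f₁ z)
    (hf₂ : ∀ z, 0 < f₂ z) (hint : Integrable (fun z => w z * logAmGmGap (f₁ z) (f₂ z)) μ)
    (hle : ∫ z, w z * logAmGmGap (f₁ z) (f₂ z) ∂μ ≤ 0) : f₁ =ᵐ[μ] f₂ := by
  have hnonneg : 0 ≤ fun z => w z * logAmGmGap (f₁ z) (f₂ z) := fun z =>
    mul_nonneg (hw z).le (logAmGmGap_nonneg (hf₁ z) (hf₂ z))
  have hzero := (integral_eq_zero_iff_of_nonneg hnonneg hint).1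
    (le_antisymm hle (integral_nonneg hnonneg))
  filter_upwards [hzero] with z hz
  exact eq_of_logAmGmGap_eq_zero (hf₁ z) (hf₂ z)
    ((mul_eq_zero.1 hz).resolve_left (hw z).ne')

lemma MeasureTheory.Integrable.mul_logAmGmGap {α : Type*} [MeasurableSpace α] {μ : Measure α}
    {w f₁ f₂ : α → ℝ} (hw : AEStronglyMeasurable w μ) (hw_nonneg : ∀ z, 0 ≤ w z)
    (hf₁ : Measurable f₁) (hf₂ : Measurable f₂) (hf₁_pos : ∀ z, 0 < f₁ z) (hf₂_pos : ∀ z, 0 < f₂ z)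
    (h₁ : Integrable (fun z => w z * log (f₁ z)) μ)
    (h₂ : Integrable (fun z => w z * log (f₂ z)) μ) :
    Integrable (fun z => w z * logAmGmGap (f₁ z) (f₂ z)) μ := by
  have hmeas : Measurable fun z => logAmGmGap (f₁ z) (f₂ z) := by
    unfold logAmGmGap
    fun_prop
  refine (h₁.sub h₂).mono (hw.mul hmeas.aestronglyMeasurable) (ae_of_all _ fun z => ?_)
  have hgap := logAmGmGap_nonneg (hf₁_pos z) (hf₂_pos z)
  simp only [Pi.sub_apply, norm_mul, Real.norm_eq_abs, ← mul_sub, abs_of_nonneg (hw_nonneg z),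
    abs_of_nonneg hgap]
  exact mul_le_mul_of_nonneg_left (logAmGmGap_le_abs_log_sub (hf₁_pos z) (hf₂_pos z)) (hw_nonneg z)

section Product

variable {Θ X : Type*} [MeasurableSpace Θ] [MeasurableSpace X] {μ : Measure Θ} {ν : Measure X}
  [SFinite ν]

lemma MeasureTheory.Integrable.mul_of_integral_eq_one {f : Θ → ℝ} {q : Θ → X → ℝ}
    (hf : Integrable f μ) (hq : Measurable (Function.uncurry q)) (hq_nonneg : ∀ θ x, 0 ≤ q θ x)
    (hq_one : ∀ θ, ∫ x, q θ x ∂ν = 1) :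
    Integrable (fun z : Θ × X => f z.1 * q z.1 z.2) (μ.prod ν) := by
  have hmeas : AEStronglyMeasurable (fun z : Θ × X => f z.1 * q z.1 z.2) (μ.prod ν) :=
    hf.1.comp_fst.mul hq.aestronglyMeasurable
  refine (integrable_prod_iff hmeas).2 ⟨ae_of_all _ fun θ =>
    (integrable_of_integral_eq_one (hq_one θ)).const_mul (f θ), hf.norm.congr (ae_of_all _ ?_)⟩
  intro θ
  simp [norm_mul, abs_of_nonneg (hq_nonneg θ _), integral_const_mul, hq_one]

end Product

section NPR

variable {Θ X : Type*} {ptr : Θ → ℝ} {psim g : Θ → X → ℝ} {lam M : ℝ} {q q₁ q₂ : Θ → X → ℝ}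

noncomputable def nprIntegrand (ptr : Θ → ℝ) (psim g : Θ → X → ℝ) (lam : ℝ) (q : Θ → X → ℝ)
    (z : Θ × X) : ℝ :=
  ptr z.1 * (psim z.1 z.2 * log (q z.1 z.2) + lam * q z.1 z.2 * g z.1 z.2)

lemma two_mul_nprIntegrand_midpoint (z : Θ × X) :
    2 * nprIntegrand ptr psim g lam (fun θ x => (q₁ θ x + q₂ θ x) / 2) z =
      nprIntegrand ptr psim g lam q₁ z + nprIntegrand ptr psim g lam q₂ z +
        ptr z.1 * psim z.1 z.2 * logAmGmGap (q₁ z.1 z.2) (q₂ z.1 z.2) := by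
  simp only [nprIntegrand, logAmGmGap]
  ring

variable [MeasurableSpace Θ] [MeasurableSpace X] {μ : Measure Θ} {ν : Measure X}

lemma NPRLoss_eq_neg_integral_prod [SFinite μ] [SFinite ν]
    (h : Integrable (nprIntegrand ptr psim g lam q) (μ.prod ν)) :
    NPRLoss μ ν ptr psim g lam q = -∫ z, nprIntegrand ptr psim g lam q z ∂μ.prod ν := by
  rw [NPRLoss, integral_prod _ h]
  rfl

lemma NPRAdmissible.integrable_nprIntegrand (hq : NPRAdmissible μ ν ptr psim g lam M q) :
    Integrable (nprIntegrand ptr psim g lam q) (μ.prod ν) :=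
  hq.2.2.2.2

variable [SFinite ν]

lemma integrable_linear_part (hptr : Integrable ptr μ) (hg : Measurable (Function.uncurry g))
    {G : ℝ} (hG : ∀ θ x, |g θ x| ≤ G) (hq : Measurable (Function.uncurry q))
    (hq_nonneg : ∀ θ x, 0 ≤ q θ x) (hq_one : ∀ θ, ∫ x, q θ x ∂ν = 1) :
    Integrable (fun z : Θ × X => ptr z.1 * (lam * q z.1 z.2 * g z.1 z.2)) (μ.prod ν) := by
  have hbdd := (hptr.mul_of_integral_eq_one hq hq_nonneg hq_one).bdd_mul
    (f := fun z => lam * g z.1 z.2) (c := |lam| * G) (measurable_const.mul hg).aestronglyMeasurable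
    (ae_of_all _ fun z => by
      rw [norm_mul, Real.norm_eq_abs, Real.norm_eq_abs]
      exact mul_le_mul_of_nonneg_left (hG z.1 z.2) (abs_nonneg lam))
  exact hbdd.congr (ae_of_all _ fun z => by ring)

lemma NPRAdmissible.integrable_log_part (hq : NPRAdmissible μ ν ptr psim g lam M q)
    (hptr : Integrable ptr μ) (hg : Measurable (Function.uncurry g)) {G : ℝ}
    (hG : ∀ θ x, |g θ x| ≤ G) :
    Integrable (fun z : Θ × X => ptr z.1 * psim z.1 z.2 * log (q z.1 z.2)) (μ.prod ν) := by
  obtain ⟨hq_meas, hq_pos, -, hq_one, hq_int⟩ := hq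
  have hlin := integrable_linear_part (lam := lam) hptr hg hG hq_meas
    (fun θ x => (hq_pos θ x).le) hq_one
  refine (hq_int.sub hlin).congr (ae_of_all _ fun z => ?_)
  simp only [Pi.sub_apply]
  ring

lemma integrable_mul_logAmGmGap_of_admissible (hptr : Integrable ptr μ)
    (hptr_nonneg : ∀ θ, 0 ≤ ptr θ) (hpsim : Measurable (Function.uncurry psim))
    (hpsim_nonneg : ∀ θ x, 0 ≤ psim θ x) (hg : Measurable (Function.uncurry g)) {G : ℝ}
    (hG : ∀ θ x, |g θ x| ≤ G) (h₁ : NPRAdmissible μ ν ptr psim g lam M q₁)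
    (h₂ : NPRAdmissible μ ν ptr psim g lam M q₂) :
    Integrable (fun z : Θ × X =>
      ptr z.1 * psim z.1 z.2 * logAmGmGap (q₁ z.1 z.2) (q₂ z.1 z.2)) (μ.prod ν) :=
  Integrable.mul_logAmGmGap (hptr.1.comp_fst.mul hpsim.aestronglyMeasurable)
    (fun z => mul_nonneg (hptr_nonneg z.1) (hpsim_nonneg z.1 z.2)) h₁.1 h₂.1
    (fun z => h₁.2.1 z.1 z.2) (fun z => h₂.2.1 z.1 z.2)
    (h₁.integrable_log_part hptr hg hG) (h₂.integrable_log_part hptr hg hG)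

lemma NPRAdmissible.midpoint (hptr : Integrable ptr μ)
    (hptr_nonneg : ∀ θ, 0 ≤ ptr θ) (hpsim : Measurable (Function.uncurry psim))
    (hpsim_nonneg : ∀ θ x, 0 ≤ psim θ x) (hg : Measurable (Function.uncurry g)) {G : ℝ}
    (hG : ∀ θ x, |g θ x| ≤ G) (h₁ : NPRAdmissible μ ν ptr psim g lam M q₁)
    (h₂ : NPRAdmissible μ ν ptr psim g lam M q₂) :
    NPRAdmissible μ ν ptr psim g lam M (fun θ x => (q₁ θ x + q₂ θ x) / 2) := by
  have hgap := integrable_mul_logAmGmGap_of_admissible hptr hptr_nonneg hpsim hpsim_nonneg hg hG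
    h₁ h₂
  have hF₁ := h₁.integrable_nprIntegrand
  have hF₂ := h₂.integrable_nprIntegrand
  obtain ⟨hq₁_meas, hq₁_pos, hq₁_le, hq₁_one, -⟩ := h₁
  obtain ⟨hq₂_meas, hq₂_pos, hq₂_le, hq₂_one, -⟩ := h₂
  refine ⟨(hq₁_meas.add hq₂_meas).div_const 2, fun θ x => ?_, fun θ x => ?_, fun θ => ?_, ?_⟩
  · linarith [hq₁_pos θ x, hq₂_pos θ x]
  · linarith [hq₁_le θ x, hq₂_le θ x]
  · rw [integral_div, integral_add (integrable_of_integral_eq_one (hq₁_one θ))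
      (integrable_of_integral_eq_one (hq₂_one θ)), hq₁_one, hq₂_one]
    norm_num
  · show Integrable (nprIntegrand ptr psim g lam fun θ x => (q₁ θ x + q₂ θ x) / 2) (μ.prod ν)
    refine (((hF₁.fun_add hF₂).fun_add hgap).div_const 2).congr (ae_of_all _ fun z => ?_)
    dsimp only
    linarith [two_mul_nprIntegrand_midpoint (ptr := ptr) (psim := psim) (g := g) (lam := lam)
      (q₁ := q₁) (q₂ := q₂) z]

lemma integral_mul_logAmGmGap_eq_NPRLoss [SFinite μ]
    (h₁ : Integrable (nprIntegrand ptr psim g lam q₁) (μ.prod ν))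
    (h₂ : Integrable (nprIntegrand ptr psim g lam q₂) (μ.prod ν))
    (hm : Integrable (nprIntegrand ptr psim g lam (fun θ x => (q₁ θ x + q₂ θ x) / 2)) (μ.prod ν)) :
    ∫ z, ptr z.1 * psim z.1 z.2 * logAmGmGap (q₁ z.1 z.2) (q₂ z.1 z.2) ∂μ.prod ν =
      NPRLoss μ ν ptr psim g lam q₁ + NPRLoss μ ν ptr psim g lam q₂ -
        2 * NPRLoss μ ν ptr psim g lam (fun θ x => (q₁ θ x + q₂ θ x) / 2) := by
  have hgap : (fun z : Θ × X => ptr z.1 * psim z.1 z.2 * logAmGmGap (q₁ z.1 z.2) (q₂ z.1 z.2)) =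
      fun z => 2 * nprIntegrand ptr psim g lam (fun θ x => (q₁ θ x + q₂ θ x) / 2) z -
        (nprIntegrand ptr psim g lam q₁ z + nprIntegrand ptr psim g lam q₂ z) := by
    ext z
    rw [two_mul_nprIntegrand_midpoint]
    ring
  rw [hgap, integral_sub (hm.const_mul 2) (h₁.fun_add h₂), integral_const_mul, integral_add h₁ h₂,
    NPRLoss_eq_neg_integral_prod h₁, NPRLoss_eq_neg_integral_prod h₂,
    NPRLoss_eq_neg_integral_prod hm]
  ring

end NPR

theorem npr_minimizer_unique_general
    {Θ X : Type*} [MeasurableSpace Θ] [MeasurableSpace X]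
    (μ : Measure Θ) (ν : Measure X) [SigmaFinite μ] [SigmaFinite ν]
    (ptr : Θ → ℝ) (psim g : Θ → X → ℝ) (lam M : ℝ)
    -- p̃ᵣ is a strictly positive probability density, bounded below
    (hptr_pos : ∀ θ, 0 < ptr θ)
    (hptr_den : ∫ θ, ptr θ ∂μ = 1)
    -- p_sim is a strictly positive conditional density, bounded above and below
    (hpsim_meas : Measurable (Function.uncurry psim))
    (hpsim_bdd : ∃ a b : ℝ, 0 < a ∧ ∀ θ x, a ≤ psim θ x ∧ psim θ x ≤ b)
    -- g is a bounded measurable function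
    (hg_meas : Measurable (Function.uncurry g))
    (hg_bdd : ∃ G : ℝ, ∀ θ x, |g θ x| ≤ G)
    -- q₁ and q₂ are admissible minimizers
    (q₁ q₂ : Θ → X → ℝ)
    (hq₁ : NPRAdmissible μ ν ptr psim g lam M q₁)
    (hq₂ : NPRAdmissible μ ν ptr psim g lam M q₂)
    (hmin₁ : ∀ q : Θ → X → ℝ, NPRAdmissible μ ν ptr psim g lam M q →
      NPRLoss μ ν ptr psim g lam q₁ ≤ NPRLoss μ ν ptr psim g lam q)
    (hmin₂ : ∀ q : Θ → X → ℝ, NPRAdmissible μ ν ptr psim g lam M q →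
      NPRLoss μ ν ptr psim g lam q₂ ≤ NPRLoss μ ν ptr psim g lam q) :
    ∀ᵐ z : Θ × X ∂μ.prod ν, q₁ z.1 z.2 = q₂ z.1 z.2 := by
  have hptr : Integrable ptr μ := integrable_of_integral_eq_one hptr_den
  obtain ⟨a, _, ha, hab⟩ := hpsim_bdd
  have hpsim_pos : ∀ θ x, 0 < psim θ x := fun θ x => ha.trans_le (hab θ x).1
  have hptr_nonneg : ∀ θ, 0 ≤ ptr θ := fun θ => (hptr_pos θ).le
  have hpsim_nonneg : ∀ θ x, 0 ≤ psim θ x := fun θ x => (hpsim_pos θ x).le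
  obtain ⟨G, hG⟩ := hg_bdd
  have hm := hq₁.midpoint hptr hptr_nonneg hpsim_meas hpsim_nonneg hg_meas hG hq₂
  have hgap_eq := integral_mul_logAmGmGap_eq_NPRLoss hq₁.integrable_nprIntegrand
    hq₂.integrable_nprIntegrand hm.integrable_nprIntegrand
  have h₁ := hmin₁ _ hm
  have h₂ := hmin₂ _ hm
  exact ae_eq_of_integral_mul_logAmGmGap_nonpos
    (fun z => mul_pos (hptr_pos z.1) (hpsim_pos z.1 z.2))
    (fun z => hq₁.2.1 z.1 z.2) (fun z => hq₂.2.1 z.1 z.2)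
    (integrable_mul_logAmGmGap_of_admissible hptr hptr_nonneg hpsim_meas hpsim_nonneg hg_meas hG
      hq₁ hq₂)
    (by linarith)

/-- The minimizer of `L_λ` over strictly positive conditional probability
densities is unique up to μ⊗ν-almost-everywhere equality: if `q₁` and `q₂` are both
strictly positive conditional densities minimizing `L_λ`, then `q₁(x|θ) = q₂(x|θ)` for
μ⊗ν-almost every `(θ,x)`. -/
theorem npr_minimizer_unique
    {Θ X : Type*} [MeasurableSpace Θ] [MeasurableSpace X]
    (μ : Measure Θ) (ν : Measure X) [SigmaFinite μ] [SigmaFinite ν]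
    (ptr : Θ → ℝ) (psim g : Θ → X → ℝ) (lam M : ℝ) (hlam : 0 < lam)
    -- p̃ᵣ is a strictly positive probability density, bounded below
    (hptr_meas : Measurable ptr) (hptr_pos : ∀ θ, 0 < ptr θ)
    (hptr_den : ∫ θ, ptr θ ∂μ = 1)
    (hptr_lb : ∃ δ : ℝ, 0 < δ ∧ ∀ θ, δ ≤ ptr θ)
    -- p_sim is a strictly positive conditional density, bounded above and below
    (hpsim_meas : Measurable (Function.uncurry psim))
    (hpsim_den : ∀ θ, ∫ x, psim θ x ∂ν = 1)
    (hpsim_bdd : ∃ a b : ℝ, 0 < a ∧ ∀ θ x, a ≤ psim θ x ∧ psim θ x ≤ b)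
    -- g is a bounded measurable function
    (hg_meas : Measurable (Function.uncurry g))
    (hg_bdd : ∃ G : ℝ, ∀ θ x, |g θ x| ≤ G)
    -- q₁ and q₂ are admissible minimizers
    (q₁ q₂ : Θ → X → ℝ)
    (hq₁ : NPRAdmissible μ ν ptr psim g lam M q₁)
    (hq₂ : NPRAdmissible μ ν ptr psim g lam M q₂)
    (hmin₁ : ∀ q : Θ → X → ℝ, NPRAdmissible μ ν ptr psim g lam M q →
      NPRLoss μ ν ptr psim g lam q₁ ≤ NPRLoss μ ν ptr psim g lam q)
    (hmin₂ : ∀ q : Θ → X → ℝ, NPRAdmissible μ ν ptr psim g lam M q →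
      NPRLoss μ ν ptr psim g lam q₂ ≤ NPRLoss μ ν ptr psim g lam q) :
    ∀ᵐ z : Θ × X ∂μ.prod ν, q₁ z.1 z.2 = q₂ z.1 z.2 :=
  npr_minimizer_unique_general μ ν ptr psim g lam M hptr_pos hptr_den hpsim_meas hpsim_bdd hg_meas
    hg_bdd q₁ q₂ hq₁ hq₂ hmin₁ hmin₂
end

section
/- Let q be a strictly positive conditional probability density and let u : Θ × X → ℝ be a bounded measurable function with ∫ u(θ,x) dν(x) = 0 for every θ, such that q + εu remains strictly positive for all sufficiently small ε. Then the map ε ↦ L_λ(q + εu) is differentiable at ε = 0 with derivative d/dε|_{ε=0} L_λ(q + εu) = −∬ p̃ᵣ(θ) u(θ,x) ( p_sim(x|θ)/q(x|θ) + λ g(θ,x) ) dν(x) dμ(θ). -/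
/-! Write the integrand of `L_λ(q + εu)` as `p̃ᵣ p_sim log (q + εu)` plus a term affine in `ε`.
The affine part is differentiated directly. For the logarithmic part, `q ≥ δ` and `|u| ≤ C` keep
`q + εu ≥ δ/2` for small `ε`, so its `ε`-derivative `p̃ᵣ p_sim u / (q + εu)` is dominated by
`(2C/δ) p̃ᵣ p_sim`, and one may differentiate under the integral sign. -/

open MeasureTheory Real

open Filter Topology

theorem Real.abs_log_add_sub_log_le_one {q t : ℝ} (hq : 0 < q) (ht : |t| ≤ q / 2) :
    |log (q + t) - log q| ≤ 1 := by
  obtain ⟨ht₁, ht₂⟩ := abs_le.mp ht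
  have hx : 0 < (q + t) / q := div_pos (by linarith) hq
  rw [← log_div (by linarith) hq.ne', abs_le]
  constructor
  · have hinv : ((q + t) / q)⁻¹ ≤ 2 := by
      rw [inv_div, div_le_iff₀ (by linarith)]; linarith
    linarith [one_sub_inv_le_log_of_pos hx]
  · have hx₂ : (q + t) / q ≤ 2 := by
      rw [div_le_iff₀ hq]; linarith
    linarith [log_le_sub_one_of_pos hx]

theorem abs_div_le_div_of_abs_le {a b c d : ℝ} (hd : 0 < d) (hdb : d ≤ b) (hac : |a| ≤ c) :
    |a / b| ≤ c / d := by
  rw [abs_div, abs_of_pos (hd.trans_le hdb)]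
  exact div_le_div₀ ((abs_nonneg a).trans hac) hac hd hdb

theorem eventually_forall_abs_mul_le_half {α : Type*} {q u : α → ℝ} {δ C : ℝ} (hδ : 0 < δ)
    (hqδ : ∀ z, δ ≤ q z) (huC : ∀ z, |u z| ≤ C) : ∀ᶠ ε in 𝓝 (0 : ℝ), ∀ z, |ε * u z| ≤ q z / 2 := by
  have hlim : Tendsto (fun ε : ℝ => |ε| * |C|) (𝓝 0) (𝓝 0) :=
    (continuous_abs.mul continuous_const).tendsto' 0 0 (by simp)
  filter_upwards [hlim.eventually (gt_mem_nhds (half_pos hδ))] with ε hε z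
  calc |ε * u z| = |ε| * |u z| := abs_mul _ _
    _ ≤ |ε| * |C| := mul_le_mul_of_nonneg_left ((huC z).trans (le_abs_self C)) (abs_nonneg ε)
    _ ≤ q z / 2 := by linarith [hqδ z]

section

variable {α : Type*} [MeasurableSpace α] {ρ : Measure α} {w q u : α → ℝ}

theorem integrable_mul_log_add {t : α → ℝ} (hw : Integrable w ρ)
    (hwq : Integrable (fun z => w z * log (q z)) ρ) (hq : Measurable q) (ht : Measurable t)
    (hq₀ : ∀ z, 0 < q z) (htq : ∀ z, |t z| ≤ q z / 2) :
    Integrable (fun z => w z * log (q z + t z)) ρ := by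
  have hdiff : Integrable (fun z => w z * (log (q z + t z) - log (q z))) ρ :=
    hw.mul_bdd (((hq.add ht).log.sub hq.log).aestronglyMeasurable)
      (ae_of_all _ fun z => abs_log_add_sub_log_le_one (hq₀ z) (htq z))
  exact (hwq.add hdiff).congr (ae_of_all _ fun z => by simp only [Pi.add_apply]; ring)

theorem hasDerivAt_integral_mul_log_add_mul {δ C : ℝ} (hw : Integrable w ρ)
    (hwq : Integrable (fun z => w z * log (q z)) ρ) (hq : Measurable q) (hu : Measurable u)
    (hδ : 0 < δ) (hqδ : ∀ z, δ ≤ q z) (huC : ∀ z, |u z| ≤ C) :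
    HasDerivAt (fun ε => ∫ z, w z * log (q z + ε * u z) ∂ρ) (∫ z, w z * (u z / q z) ∂ρ) 0 := by
  have hq₀ z : 0 < q z := hδ.trans_le (hqδ z)
  have hs := eventually_forall_abs_mul_le_half hδ hqδ huC
  have hlow {ε : ℝ} (hε : ∀ z, |ε * u z| ≤ q z / 2) z : δ / 2 ≤ q z + ε * u z := by
    linarith [(abs_le.mp (hε z)).1, hqδ z]
  have key := hasDerivAt_integral_of_dominated_loc_of_deriv_le (μ := ρ) hs
    (F' := fun ε z => w z * (u z / (q z + ε * u z))) (bound := fun z => C / (δ / 2) * ‖w z‖)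
    (hs.mono fun ε hε => (integrable_mul_log_add hw hwq hq (hu.const_mul ε) hq₀ hε).1)
    (by simpa using hwq)
    (hw.aestronglyMeasurable.mul (hu.div (hq.add (hu.const_mul 0))).aestronglyMeasurable)
    (ae_of_all _ fun z ε hε => ?_) (hw.norm.const_mul _) (ae_of_all _ fun z ε hε => ?_)
  · simpa using key.2
  · rw [norm_mul, mul_comm]
    exact mul_le_mul_of_nonneg_right
      (abs_div_le_div_of_abs_le (half_pos hδ) (hlow hε z) (huC z)) (norm_nonneg _)
  · have hlin : HasDerivAt (fun t => q z + t * u z) (u z) ε := by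
      simpa using ((hasDerivAt_id ε).mul_const (u z)).const_add (q z)
    exact (hlin.log ((half_pos hδ).trans_le (hlow hε z)).ne').const_mul (w z)

theorem integrable_mul_div {δ C : ℝ} (hw : Integrable w ρ) (hq : Measurable q)
    (hu : Measurable u) (hδ : 0 < δ) (hqδ : ∀ z, δ ≤ q z) (huC : ∀ z, |u z| ≤ C) :
    Integrable (fun z => w z * (u z / q z)) ρ :=
  hw.mul_bdd (hu.div hq).aestronglyMeasurable
    (ae_of_all _ fun z => abs_div_le_div_of_abs_le hδ (hqδ z) (huC z))

theorem hasDerivAt_integral_add_mul {a b : α → ℝ} (ha : Integrable a ρ) (hb : Integrable b ρ)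
    (x : ℝ) : HasDerivAt (fun ε => ∫ z, a z + ε * b z ∂ρ) (∫ z, b z ∂ρ) x := by
  have hsplit : (fun ε => ∫ z, a z + ε * b z ∂ρ) = fun ε => ∫ z, a z ∂ρ + ε * ∫ z, b z ∂ρ :=
    funext fun ε => by rw [integral_add ha (hb.const_mul ε), integral_const_mul]
  rw [hsplit]
  simpa using ((hasDerivAt_id x).mul_const (∫ z, b z ∂ρ)).const_add (∫ z, a z ∂ρ)

end

theorem integral_integral_eq_integral_add {Θ X E : Type*} [MeasurableSpace Θ] [MeasurableSpace X]
    [NormedAddCommGroup E] [NormedSpace ℝ E] {μ : Measure Θ} {ν : Measure X} [SFinite μ]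
    [SFinite ν] {f : Θ → X → E} {a b : Θ × X → E} (ha : Integrable a (μ.prod ν))
    (hb : Integrable b (μ.prod ν)) (hf : ∀ θ x, f θ x = a (θ, x) + b (θ, x)) :
    ∫ θ, ∫ x, f θ x ∂ν ∂μ = ∫ z, a z ∂μ.prod ν + ∫ z, b z ∂μ.prod ν := by
  have hfab : Function.uncurry f = a + b := funext fun z => hf z.1 z.2
  rw [integral_integral (hfab ▸ ha.add hb), ← integral_add ha hb]
  exact integral_congr_ae (ae_of_all _ fun z => hf z.1 z.2)

theorem npr_loss_first_variation_general
    {Θ X : Type*} [MeasurableSpace Θ] [MeasurableSpace X]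
    (μ : Measure Θ) (ν : Measure X) [SigmaFinite μ] [SigmaFinite ν]
    (ptr : Θ → ℝ) (psim g : Θ → X → ℝ) (lam : ℝ)
    -- q is a strictly positive conditional probability density bounded below
    (q : Θ → X → ℝ)
    (hq_meas : Measurable (Function.uncurry q))
    (hq_lb : ∃ δ : ℝ, 0 < δ ∧ ∀ θ x, δ ≤ q θ x)
    -- u is a bounded measurable perturbation with zero ν-mean in x for every θ
    (u : Θ → X → ℝ)
    (hu_meas : Measurable (Function.uncurry u))
    (hu_bdd : ∃ C : ℝ, ∀ θ x, |u θ x| ≤ C)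
    -- finiteness of all integrals appearing
    (hInt₁ : Integrable (fun z : Θ × X => ptr z.1 * psim z.1 z.2) (μ.prod ν))
    (hInt₂ : Integrable (fun z : Θ × X =>
      ptr z.1 * psim z.1 z.2 * Real.log (q z.1 z.2)) (μ.prod ν))
    (hInt₃ : Integrable (fun z : Θ × X =>
      ptr z.1 * q z.1 z.2 * g z.1 z.2) (μ.prod ν))
    (hInt₄ : Integrable (fun z : Θ × X =>
      ptr z.1 * u z.1 z.2 * g z.1 z.2) (μ.prod ν)) :
    HasDerivAt
      (fun ε : ℝ => NPRLoss μ ν ptr psim g lam (fun θ x => q θ x + ε * u θ x))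
      (-∫ θ, ∫ x, ptr θ * u θ x * (psim θ x / q θ x + lam * g θ x) ∂ν ∂μ) 0 := by
  obtain ⟨δ, hδ, hqδ⟩ := hq_lb
  obtain ⟨C, huC⟩ := hu_bdd
  have hq : Measurable fun z : Θ × X => q z.1 z.2 := hq_meas
  have hu : Measurable fun z : Θ × X => u z.1 z.2 := hu_meas
  have hlog := hasDerivAt_integral_mul_log_add_mul hInt₁ hInt₂ hq hu
    hδ (fun z => hqδ z.1 z.2) (fun z => huC z.1 z.2)
  have hlin := hasDerivAt_integral_add_mul (hInt₃.const_mul lam) (hInt₄.const_mul lam) 0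
  have hloss : (fun ε : ℝ => NPRLoss μ ν ptr psim g lam (fun θ x => q θ x + ε * u θ x))
      =ᶠ[𝓝 0] fun ε => -(∫ z, ptr z.1 * psim z.1 z.2 * log (q z.1 z.2 + ε * u z.1 z.2) ∂μ.prod ν
        + ∫ z, lam * (ptr z.1 * q z.1 z.2 * g z.1 z.2)
          + ε * (lam * (ptr z.1 * u z.1 z.2 * g z.1 z.2)) ∂μ.prod ν) := by
    filter_upwards [eventually_forall_abs_mul_le_half (q := fun z : Θ × X => q z.1 z.2)
      (u := fun z => u z.1 z.2) hδ (fun z => hqδ z.1 z.2) (fun z => huC z.1 z.2)] with ε hε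
    rw [NPRLoss, integral_integral_eq_integral_add
      (integrable_mul_log_add hInt₁ hInt₂ hq (hu.const_mul ε)
        (fun z => hδ.trans_le (hqδ z.1 z.2)) hε)
      ((hInt₃.const_mul lam).add ((hInt₄.const_mul lam).const_mul ε))
      fun θ x => by simp only [Pi.add_apply]; ring]
    rfl
  have hquot := integrable_mul_div hInt₁ hq hu hδ (fun z => hqδ z.1 z.2) (fun z => huC z.1 z.2)
  rw [integral_integral_eq_integral_add hquot (hInt₄.const_mul lam) fun θ x => by ring]
  exact (hlog.add hlin).neg.congr_of_eventuallyEq hloss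

/-- For a strictly positive conditional probability density `q` (bounded
below by a positive constant) and a bounded measurable perturbation `u` with
`∫ u(θ,x) dν(x) = 0` for every `θ`, such that `q + εu` remains strictly positive for all
sufficiently small `ε`, the map `ε ↦ L_λ(q + εu)` is differentiable at `ε = 0` with
derivative `−∬ p̃ᵣ(θ) u(θ,x) (p_sim(x|θ)/q(x|θ) + λ g(θ,x)) dν(x) dμ(θ)`. -/
theorem npr_loss_first_variation
    {Θ X : Type*} [MeasurableSpace Θ] [MeasurableSpace X]
    (μ : Measure Θ) (ν : Measure X) [SigmaFinite μ] [SigmaFinite ν]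
    (ptr : Θ → ℝ) (psim g : Θ → X → ℝ) (lam : ℝ) (hlam : 0 < lam)
    -- p̃ᵣ is a strictly positive probability density
    (hptr_meas : Measurable ptr) (hptr_pos : ∀ θ, 0 < ptr θ)
    (hptr_den : ∫ θ, ptr θ ∂μ = 1)
    -- p_sim is a strictly positive conditional probability density
    (hpsim_meas : Measurable (Function.uncurry psim))
    (hpsim_pos : ∀ θ x, 0 < psim θ x)
    (hpsim_den : ∀ θ, ∫ x, psim θ x ∂ν = 1)
    -- g is a bounded measurable function
    (hg_meas : Measurable (Function.uncurry g))
    (hg_bdd : ∃ G : ℝ, ∀ θ x, |g θ x| ≤ G)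
    -- q is a strictly positive conditional probability density bounded below
    (q : Θ → X → ℝ)
    (hq_meas : Measurable (Function.uncurry q))
    (hq_lb : ∃ δ : ℝ, 0 < δ ∧ ∀ θ x, δ ≤ q θ x)
    (hq_den : ∀ θ, ∫ x, q θ x ∂ν = 1)
    -- u is a bounded measurable perturbation with zero ν-mean in x for every θ
    (u : Θ → X → ℝ)
    (hu_meas : Measurable (Function.uncurry u))
    (hu_bdd : ∃ C : ℝ, ∀ θ x, |u θ x| ≤ C)
    (hu_mean : ∀ θ, ∫ x, u θ x ∂ν = 0)
    -- q + εu remains strictly positive for all sufficiently small ε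
    (hpos : ∃ ε₀ : ℝ, 0 < ε₀ ∧ ∀ ε : ℝ, |ε| ≤ ε₀ → ∀ θ x, 0 < q θ x + ε * u θ x)
    -- finiteness of all integrals appearing
    (hInt₁ : Integrable (fun z : Θ × X => ptr z.1 * psim z.1 z.2) (μ.prod ν))
    (hInt₂ : Integrable (fun z : Θ × X =>
      ptr z.1 * psim z.1 z.2 * Real.log (q z.1 z.2)) (μ.prod ν))
    (hInt₃ : Integrable (fun z : Θ × X =>
      ptr z.1 * q z.1 z.2 * g z.1 z.2) (μ.prod ν))
    (hInt₄ : Integrable (fun z : Θ × X =>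
      ptr z.1 * u z.1 z.2 * g z.1 z.2) (μ.prod ν))
    (hInt₅ : Integrable (fun z : Θ × X =>
      ptr z.1 * u z.1 z.2 * (psim z.1 z.2 / q z.1 z.2 + lam * g z.1 z.2)) (μ.prod ν)) :
    HasDerivAt
      (fun ε : ℝ => NPRLoss μ ν ptr psim g lam (fun θ x => q θ x + ε * u θ x))
      (-∫ θ, ∫ x, ptr θ * u θ x * (psim θ x / q θ x + lam * g θ x) ∂ν ∂μ) 0 :=
  npr_loss_first_variation_general μ ν ptr psim g lam q hq_meas hq_lb u hu_meas hu_bdd hInt₁ hInt₂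
    hInt₃ hInt₄
end
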